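/- arXiv:2509.21828 — 4 statements merged into one kernel-verified Lean document; each statement's English description precedes it below -/
import Mathlib

section
/- Let α be a nonempty finite type (the space of trajectories) and S* : α → ℝ a ground-truth score function. Let σ(x) = 1/(1 + exp(−x)) denote the logistic function. For S : α → ℝ define the population Bradley–Terry log-likelihood L(S) = ∑_{(a,b) ∈ α × α} [ σ(S*(a) − S*(b))·log σ(S(a) − S(b)) + σ(S*(b) − S*(a))·log σ(S(b) − S(a)) ]. Then S : α → ℝ is a global maximizer of L if and only if there exists a constant c ∈ ℝ with S(a) = S*(a) + c for all a ∈ α. -/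
/-- The logistic (sigmoid) function. -/
noncomputable def logistic (x : ℝ) : ℝ := 1 / (1 + Real.exp (-x))

lemma logistic_pos (x : ℝ) : 0 < logistic x := by
  unfold logistic
  positivity

lemma one_sub_logistic (x : ℝ) : 1 - logistic x = logistic (-x) := by
  unfold logistic
  have h1 : (0:ℝ) < 1 + Real.exp (-x) := by positivity
  have h2 : (0:ℝ) < 1 + Real.exp (-(-x)) := by positivity
  rw [neg_neg] at h2 ⊢
  have hm : Real.exp (-x) * Real.exp x = 1 := by rw [← Real.exp_add]; simp
  field_simp
  nlinarith [hm]

lemma logistic_lt_one (x : ℝ) : logistic x < 1 := by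
  have := logistic_pos (-x)
  have := one_sub_logistic x
  linarith

lemma logistic_inj : Function.Injective logistic := by
  intro x y h
  unfold logistic at h
  have hx : (0:ℝ) < 1 + Real.exp (-x) := by positivity
  have hy : (0:ℝ) < 1 + Real.exp (-y) := by positivity
  rw [div_eq_div_iff (ne_of_gt hx) (ne_of_gt hy)] at h
  have : Real.exp (-x) = Real.exp (-y) := by linarith
  have := Real.exp_injective this
  linarith

/-- Gibbs inequality (non-strict). -/
lemma gibbs_le {p q : ℝ} (hp0 : 0 < p) (hp1 : p < 1) (hq0 : 0 < q) (hq1 : q < 1) :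
    p * Real.log q + (1 - p) * Real.log (1 - q) ≤
      p * Real.log p + (1 - p) * Real.log (1 - p) := by
  have h1 : Real.log q - Real.log p ≤ q / p - 1 := by
    rw [← Real.log_div (ne_of_gt hq0) (ne_of_gt hp0)]
    exact Real.log_le_sub_one_of_pos (by positivity)
  have h2 : Real.log (1 - q) - Real.log (1 - p) ≤ (1 - q) / (1 - p) - 1 := by
    rw [← Real.log_div (by linarith) (by linarith)]
    exact Real.log_le_sub_one_of_pos (div_pos (by linarith) (by linarith))
  have e1 : p * (q / p - 1) = q - p := by
    rw [mul_sub, mul_div_cancel₀ _ (ne_of_gt hp0), mul_one]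
  have e2 : (1 - p) * ((1 - q) / (1 - p) - 1) = p - q := by
    rw [mul_sub, mul_div_cancel₀ _ (by linarith : (1:ℝ) - p ≠ 0), mul_one]; ring
  nlinarith [mul_le_mul_of_nonneg_left h1 (le_of_lt hp0),
    mul_le_mul_of_nonneg_left h2 (by linarith : (0:ℝ) ≤ 1 - p)]

/-- Gibbs inequality, strict version. -/
lemma gibbs_lt {p q : ℝ} (hp0 : 0 < p) (hp1 : p < 1) (hq0 : 0 < q) (hq1 : q < 1)
    (hne : q ≠ p) :
    p * Real.log q + (1 - p) * Real.log (1 - q) <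
      p * Real.log p + (1 - p) * Real.log (1 - p) := by
  have h1 : Real.log q - Real.log p < q / p - 1 := by
    rw [← Real.log_div (ne_of_gt hq0) (ne_of_gt hp0)]
    refine Real.log_lt_sub_one_of_pos (by positivity) ?_
    intro h
    exact hne (by field_simp at h; linarith)
  have h2 : Real.log (1 - q) - Real.log (1 - p) ≤ (1 - q) / (1 - p) - 1 := by
    rw [← Real.log_div (by linarith) (by linarith)]
    exact Real.log_le_sub_one_of_pos (div_pos (by linarith) (by linarith))
  have e1 : p * (q / p - 1) = q - p := by
    rw [mul_sub, mul_div_cancel₀ _ (ne_of_gt hp0), mul_one]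
  have e2 : (1 - p) * ((1 - q) / (1 - p) - 1) = p - q := by
    rw [mul_sub, mul_div_cancel₀ _ (by linarith : (1:ℝ) - p ≠ 0), mul_one]; ring
  nlinarith [mul_lt_mul_of_pos_left h1 hp0,
    mul_le_mul_of_nonneg_left h2 (by linarith : (0:ℝ) ≤ 1 - p)]

/-- Per-pair Bradley–Terry term. -/
noncomputable def BTterm (d x : ℝ) : ℝ :=
  logistic d * Real.log (logistic x) + logistic (-d) * Real.log (logistic (-x))

lemma BTterm_le (d x : ℝ) : BTterm d x ≤ BTterm d d := by
  unfold BTterm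
  rw [← one_sub_logistic d, ← one_sub_logistic x]
  exact gibbs_le (logistic_pos d) (logistic_lt_one d) (logistic_pos x) (logistic_lt_one x)

lemma BTterm_lt (d x : ℝ) (h : x ≠ d) : BTterm d x < BTterm d d := by
  unfold BTterm
  rw [← one_sub_logistic d, ← one_sub_logistic x]
  exact gibbs_lt (logistic_pos d) (logistic_lt_one d) (logistic_pos x) (logistic_lt_one x)
    (fun hq => h (logistic_inj hq))

/-- Population-level core of Theorem 1: a score function maximizes the
population Bradley–Terry log-likelihood iff it equals the ground-truth score
up to an additive constant. -/
theorem BT_population_maximizer_iff_shift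
    {α : Type*} [Fintype α] [Nonempty α]
    (Sstar : α → ℝ)
    (L : (α → ℝ) → ℝ)
    (hL : ∀ S : α → ℝ, L S = ∑ p : α × α,
      (logistic (Sstar p.1 - Sstar p.2) * Real.log (logistic (S p.1 - S p.2)) +
        logistic (Sstar p.2 - Sstar p.1) * Real.log (logistic (S p.2 - S p.1))))
    (S : α → ℝ) :
    (∀ S' : α → ℝ, L S' ≤ L S) ↔ ∃ c : ℝ, ∀ a : α, S a = Sstar a + c := by
  -- rewrite L in terms of BTterm
  have hL' : ∀ S' : α → ℝ, L S' = ∑ p : α × α,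
      (BTterm (Sstar p.1 - Sstar p.2) (S' p.1 - S' p.2) +
        BTterm (Sstar p.2 - Sstar p.1) (S' p.2 - S' p.1)) / 2 := by
    intro S'
    rw [hL S']
    rw [← Finset.sum_div]
    rw [eq_div_iff (by norm_num : (2:ℝ) ≠ 0), Finset.sum_mul]
    apply Finset.sum_congr rfl
    intro p _
    unfold BTterm
    have h1 : -(Sstar p.1 - Sstar p.2) = Sstar p.2 - Sstar p.1 := by ring
    have h2 : -(S' p.1 - S' p.2) = S' p.2 - S' p.1 := by ring
    have h3 : -(Sstar p.2 - Sstar p.1) = Sstar p.1 - Sstar p.2 := by ring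
    have h4 : -(S' p.2 - S' p.1) = S' p.1 - S' p.2 := by ring
    rw [h1, h2, h3, h4]; ring
  have hle : ∀ S' : α → ℝ, L S' ≤ L Sstar := by
    intro S'
    rw [hL' S', hL' Sstar]
    apply Finset.sum_le_sum
    intro p _
    have a1 := BTterm_le (Sstar p.1 - Sstar p.2) (S' p.1 - S' p.2)
    have a2 := BTterm_le (Sstar p.2 - Sstar p.1) (S' p.2 - S' p.1)
    linarith
  constructor
  · intro hmax
    have hdiff : ∀ a b : α, S a - S b = Sstar a - Sstar b := by
      by_contra h
      push_neg at h
      obtain ⟨a, b, hab⟩ := h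
      have hlt : L S < L Sstar := by
        rw [hL' S, hL' Sstar]
        apply Finset.sum_lt_sum
        · intro p _
          have a1 := BTterm_le (Sstar p.1 - Sstar p.2) (S p.1 - S p.2)
          have a2 := BTterm_le (Sstar p.2 - Sstar p.1) (S p.2 - S p.1)
          linarith
        · refine ⟨(a, b), Finset.mem_univ _, ?_⟩
          have a1 := BTterm_lt (Sstar a - Sstar b) (S a - S b) hab
          have a2 := BTterm_le (Sstar b - Sstar a) (S b - S a)
          simp only
          linarith
      exact absurd (hmax Sstar) (not_le.mpr hlt)
    obtain ⟨a0⟩ := (inferInstance : Nonempty α)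
    refine ⟨S a0 - Sstar a0, fun a => ?_⟩
    have := hdiff a a0
    linarith
  · rintro ⟨c, hc⟩ S'
    have hLS : L S = L Sstar := by
      rw [hL' S, hL' Sstar]
      apply Finset.sum_congr rfl
      intro p _
      rw [hc p.1, hc p.2]
      ring_nf
    rw [hLS]
    exact hle S'
end

section
/- Let n ∈ ℕ. For each agent i ∈ Fin n, let Oᵢ be a finite local-observation type, Aᵢ a nonempty finite local-action type, and Eᵢ a real normed vector space of policy parameters; let S be a finite global-state type with observation maps oᵢ : S → Oᵢ. Let πᵢ : Eᵢ → Oᵢ → Aᵢ → ℝ be local policies that are everywhere positive, satisfy ∑_{a ∈ Aᵢ} πᵢ(θᵢ)(o)(a) = 1 for all θᵢ and o, and are Fréchet-differentiable in θᵢ. Define the factorized joint policy on E = E₁ × ⋯ × Eₙ by π(θ)(s)(a) = ∏ᵢ πᵢ(θᵢ)(oᵢ(s))(aᵢ). Let ρ : S → ℝ be nonnegative with ∑_s ρ(s) = 1, let Âᵢ : Oᵢ × Aᵢ → ℝ be local advantage functions, wᵢ ∈ ℝ weights, c ∈ ℝ, and define the global advantage Â_tot(s,a) = ∑ᵢ wᵢ·Âᵢ(oᵢ(s),aᵢ)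 + c. Define the global policy gradient at θ as the continuous linear functional G(θ) = ∑_{s} ρ(s)·∑_{a} π(θ)(s)(a)·Â_tot(s,a)·D_θ[log π(·)(s)(a)](θ) on E, and for each i the local policy gradient Gᵢ(θᵢ) = ∑_{s} ρ(s)·∑_{aᵢ} πᵢ(θᵢ)(oᵢ(s))(aᵢ)·Âᵢ(oᵢ(s),aᵢ)·D_{θᵢ}[log πᵢ(·)(oᵢ(s))(aᵢ)](θᵢ) on Eᵢ. Then G(θ) = ∑ᵢ wᵢ·(Gᵢ(θᵢ) ∘ prᵢ), where prᵢ : E → Eᵢ is the i-th coordinate projection. -/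
open Finset

lemma pi_sum_smul_factor {n : ℕ} (A : Fin n → Type*) [∀ i, Fintype (A i)]
    {M : Type*} [AddCommGroup M] [Module ℝ M]
    (f : ∀ k, A k → ℝ) (j : Fin n) (v : A j → M) :
    ∑ a : ∀ k, A k, (∏ k, f k (a k)) • v (a j)
      = (∏ k ∈ Finset.univ.erase j, ∑ b, f k b) • ∑ b, f j b • v b := by
  classical
  rw [← Equiv.sum_comp (Equiv.piSplitAt j A).symm
        (fun a : ∀ k, A k => (∏ k, f k (a k)) • v (a j))]
  rw [Fintype.sum_prod_type]
  have hj : ∀ (b : A j) (g : ∀ k : {k // k ≠ j}, A k),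
      (Equiv.piSplitAt j A).symm (b, g) j = b := by
    intro b g; simp [Equiv.piSplitAt_symm_apply]
  have hne : ∀ (b : A j) (g : ∀ k : {k // k ≠ j}, A k) (k : {k // k ≠ j}),
      (Equiv.piSplitAt j A).symm (b, g) (k : Fin n) = g k := by
    intro b g k; simp [Equiv.piSplitAt_symm_apply, k.2]
  have hprod : ∀ (b : A j) (g : ∀ k : {k // k ≠ j}, A k),
      (∏ k, f k ((Equiv.piSplitAt j A).symm (b, g) k))
        = f j b * ∏ k : {k // k ≠ j}, f k (g k) := by
    intro b g
    rw [← Finset.mul_prod_erase Finset.univ _ (Finset.mem_univ j), hj]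
    congr 1
    rw [Finset.prod_subtype (p := fun k => k ≠ j) (Finset.univ.erase j)
      (fun k => by simp) (fun k => f k ((Equiv.piSplitAt j A).symm (b, g) k))]
    exact Finset.prod_congr rfl fun k _ => by rw [hne]
  have hZ : (∏ k ∈ Finset.univ.erase j, ∑ b, f k b)
      = ∑ g : ∀ k : {k // k ≠ j}, A k, ∏ k : {k // k ≠ j}, f k (g k) := by
    rw [Finset.prod_subtype (p := fun k => k ≠ j) (Finset.univ.erase j) (fun k => by simp)
      (fun k => ∑ b, f k b)]
    exact Fintype.prod_sum _
  calc ∑ b : A j, ∑ g : ∀ k : {k // k ≠ j}, A k,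
        (∏ k, f k ((Equiv.piSplitAt j A).symm (b, g) k)) • v ((Equiv.piSplitAt j A).symm (b, g) j)
      = ∑ b : A j, ∑ g : ∀ k : {k // k ≠ j}, A k,
          (∏ k : {k // k ≠ j}, f k (g k)) • (f j b • v b) := by
        refine Finset.sum_congr rfl fun b _ => Finset.sum_congr rfl fun g _ => ?_
        rw [hprod, hj, mul_comm, mul_smul]
    _ = ∑ b : A j, (∑ g : ∀ k : {k // k ≠ j}, A k, ∏ k : {k // k ≠ j}, f k (g k)) • (f j b • v b) := by
        refine Finset.sum_congr rfl fun b _ => ?_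
        rw [Finset.sum_smul]
    _ = _ := by rw [hZ, ← Finset.smul_sum]

lemma prod_update_absorb {n : ℕ} (A : Fin n → Type*) [∀ i, Fintype (A i)]
    (f : ∀ k, A k → ℝ) (i : Fin n) (g : A i → ℝ) (a : ∀ k, A k) :
    (∏ k, (Function.update f i (fun b => f i b * g b)) k (a k))
      = (∏ k, f k (a k)) * g (a i) := by
  classical
  rw [← Finset.mul_prod_erase Finset.univ
      (fun k => (Function.update f i (fun b => f i b * g b)) k (a k)) (Finset.mem_univ i),
    ← Finset.mul_prod_erase Finset.univ (fun k => f k (a k)) (Finset.mem_univ i)]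
  rw [Function.update_self]
  have : ∀ k ∈ Finset.univ.erase i,
      (Function.update f i (fun b => f i b * g b)) k (a k) = f k (a k) := by
    intro k hk
    rw [Function.update_of_ne (Finset.ne_of_mem_erase hk)]
  rw [Finset.prod_congr rfl this]
  ring

lemma key_sum {n : ℕ} (A : Fin n → Type*) [∀ i, Fintype (A i)]
    {M : Type*} [AddCommGroup M] [Module ℝ M]
    (f : ∀ k, A k → ℝ) (hf : ∀ k, ∑ b, f k b = 1)
    (v : ∀ k, A k → M) (hv : ∀ k, ∑ b, f k b • v k b = 0)
    (g : ∀ k, A k → ℝ) (w : Fin n → ℝ) (c : ℝ) :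
    ∑ a : ∀ k, A k, ((∏ k, f k (a k)) * ((∑ i, w i * g i (a i)) + c)) • ∑ j, v j (a j)
      = ∑ j, w j • ∑ b, (f j b * g j b) • v j b := by
  classical
  -- T i j : mixed term
  have hT : ∀ i j : Fin n, ∑ a : ∀ k, A k, ((∏ k, f k (a k)) * g i (a i)) • v j (a j)
      = if i = j then ∑ b, (f j b * g j b) • v j b else 0 := by
    intro i j
    have habs : ∀ a : ∀ k, A k, ((∏ k, f k (a k)) * g i (a i)) • v j (a j)
        = (∏ k, (Function.update f i (fun b => f i b * g i b)) k (a k)) • v j (a j) := by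
      intro a; rw [prod_update_absorb]
    rw [Finset.sum_congr rfl fun a _ => habs a,
      pi_sum_smul_factor A (Function.update f i (fun b => f i b * g i b)) j (v j)]
    by_cases hij : i = j
    · subst hij
      rw [if_pos rfl]
      have h1 : (∏ k ∈ Finset.univ.erase i,
          ∑ b, (Function.update f i (fun b => f i b * g i b)) k b) = 1 := by
        rw [Finset.prod_congr rfl (fun k hk => by
          rw [Function.update_of_ne (Finset.ne_of_mem_erase hk)])]
        exact Finset.prod_eq_one fun k _ => hf k
      rw [h1, one_smul]
      refine Finset.sum_congr rfl fun b _ => ?_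
      rw [Function.update_self]
    · rw [if_neg hij]
      have h2 : ∑ b, (Function.update f i (fun b => f i b * g i b)) j b • v j b = 0 := by
        rw [Finset.sum_congr rfl (fun b _ => by
          rw [Function.update_of_ne (Ne.symm hij)])]
        exact hv j
      rw [h2, smul_zero]
  -- constant term
  have hC : ∀ j : Fin n, ∑ a : ∀ k, A k, (∏ k, f k (a k)) • v j (a j) = 0 := by
    intro j
    rw [pi_sum_smul_factor A f j (v j), hv j, smul_zero]
  calc ∑ a : ∀ k, A k, ((∏ k, f k (a k)) * ((∑ i, w i * g i (a i)) + c)) • ∑ j, v j (a j)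
      = ∑ a : ∀ k, A k, ∑ j, (∑ i, w i • (((∏ k, f k (a k)) * g i (a i)) • v j (a j)))
          + ∑ a : ∀ k, A k, ∑ j, c • ((∏ k, f k (a k)) • v j (a j)) := by
        rw [← Finset.sum_add_distrib]
        refine Finset.sum_congr rfl fun a _ => ?_
        rw [← Finset.sum_add_distrib, Finset.smul_sum]
        refine Finset.sum_congr rfl fun j _ => ?_
        have hscal : ((∏ k, f k (a k)) * ((∑ i, w i * g i (a i)) + c))
            = (∑ i, w i * ((∏ k, f k (a k)) * g i (a i))) + c * ∏ k, f k (a k) := by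
          rw [mul_add, Finset.mul_sum, mul_comm _ c]
          congr 1
          exact Finset.sum_congr rfl fun i _ => by ring
        rw [hscal, add_smul, Finset.sum_smul]
        simp only [mul_smul]
    _ = (∑ j, ∑ i, w i • ∑ a : ∀ k, A k, ((∏ k, f k (a k)) * g i (a i)) • v j (a j))
          + ∑ j, c • ∑ a : ∀ k, A k, (∏ k, f k (a k)) • v j (a j) := by
        congr 1
        · rw [Finset.sum_comm]
          refine Finset.sum_congr rfl fun j _ => ?_
          rw [Finset.sum_comm]
          exact Finset.sum_congr rfl fun i _ => (Finset.smul_sum).symm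
        · rw [Finset.sum_comm]
          exact Finset.sum_congr rfl fun j _ => (Finset.smul_sum).symm
    _ = ∑ j, w j • ∑ b, (f j b * g j b) • v j b := by
        simp only [hT, hC, smul_zero, Finset.sum_const_zero, add_zero]
        refine Finset.sum_congr rfl fun j _ => ?_
        rw [Finset.sum_eq_single j (fun i _ hij => by rw [if_neg hij, smul_zero])
          (fun h => absurd (Finset.mem_univ j) h), if_pos rfl]


/-- Proposition 3 (global–local consistency): for a factorized joint policy,
the global policy gradient with mixed advantage `Â_tot = ∑ᵢ wᵢ Âᵢ + c` equals
the weighted sum of the local policy gradients (composed with the coordinate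
projections). -/
theorem global_local_policy_gradient_consistency
    {n : ℕ}
    (O A : Fin n → Type*) [∀ i, Fintype (O i)] [∀ i, Fintype (A i)] [∀ i, Nonempty (A i)]
    (E : Fin n → Type*) [∀ i, NormedAddCommGroup (E i)] [∀ i, NormedSpace ℝ (E i)]
    {S : Type*} [Fintype S]
    (obs : ∀ i, S → O i)
    (pol : ∀ i, E i → O i → A i → ℝ)
    (hpos : ∀ i θi o a, 0 < pol i θi o a)
    (hsum : ∀ i θi o, ∑ a, pol i θi o a = 1)
    (hdiff : ∀ i o a, Differentiable ℝ (fun θi : E i => pol i θi o a))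
    (ρ : S → ℝ) (hρ_nonneg : ∀ s, 0 ≤ ρ s) (hρ_sum : ∑ s, ρ s = 1)
    (Aloc : ∀ i, O i × A i → ℝ) (w : Fin n → ℝ) (c : ℝ)
    (Atot : S → (∀ i, A i) → ℝ)
    (hAtot : ∀ s a, Atot s a = (∑ i, w i * Aloc i (obs i s, a i)) + c)
    (θ : ∀ i, E i) :
    (∑ s : S, ∑ a : ∀ i, A i,
        (ρ s * ((∏ i, pol i (θ i) (obs i s) (a i)) * Atot s a)) •
          fderiv ℝ (fun θ' : ∀ i, E i =>
            Real.log (∏ i, pol i (θ' i) (obs i s) (a i))) θ)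
      = ∑ i, w i •
          ((∑ s : S, ∑ ai : A i,
              (ρ s * (pol i (θ i) (obs i s) ai * Aloc i (obs i s, ai))) •
                fderiv ℝ (fun θi' : E i => Real.log (pol i θi' (obs i s) ai)) (θ i)).comp
            (ContinuousLinearMap.proj i)) := by
  classical
  set D : ∀ i, O i → A i → (E i →L[ℝ] ℝ) :=
    fun i o a => fderiv ℝ (fun θi' : E i => Real.log (pol i θi' o a)) (θ i) with hD
  -- differentiability of the local log-policy
  have hlogdiff : ∀ i o a, HasFDerivAt (fun θi' : E i => Real.log (pol i θi' o a))
      (D i o a) (θ i) := fun i o a =>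
    ((hdiff i o a (θ i)).log (ne_of_gt (hpos i (θ i) o a))).hasFDerivAt
  -- score identity
  have hscore : ∀ i o, ∑ b, pol i (θ i) o b • D i o b = 0 := by
    intro i o
    have hDval : ∀ b, D i o b
        = (pol i (θ i) o b)⁻¹ • fderiv ℝ (fun θi : E i => pol i θi o b) (θ i) := fun b =>
      (((hdiff i o b (θ i)).hasFDerivAt).log (ne_of_gt (hpos i (θ i) o b))).fderiv
    have h1 : ∑ b, pol i (θ i) o b • D i o b
        = ∑ b, fderiv ℝ (fun θi : E i => pol i θi o b) (θ i) := by
      refine Finset.sum_congr rfl fun b _ => ?_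
      rw [hDval b, smul_smul, mul_inv_cancel₀ (ne_of_gt (hpos i (θ i) o b)), one_smul]
    have h2 : HasFDerivAt (fun θi : E i => ∑ b, pol i θi o b)
        (∑ b, fderiv ℝ (fun θi : E i => pol i θi o b) (θ i)) (θ i) :=
      HasFDerivAt.fun_sum fun b _ => (hdiff i o b (θ i)).hasFDerivAt
    have h3 : (fun θi : E i => ∑ b, pol i θi o b) = fun _ => (1 : ℝ) :=
      funext fun θi => hsum i θi o
    rw [h3] at h2
    rw [h1, h2.unique (hasFDerivAt_const 1 (θ i))]
  -- derivative of the log of the joint policy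
  have hglobal : ∀ s (a : ∀ i, A i),
      fderiv ℝ (fun θ' : ∀ i, E i => Real.log (∏ i, pol i (θ' i) (obs i s) (a i))) θ
        = ∑ i, (D i (obs i s) (a i)).comp (ContinuousLinearMap.proj i) := by
    intro s a
    have hfun : (fun θ' : ∀ i, E i => Real.log (∏ i, pol i (θ' i) (obs i s) (a i)))
        = fun θ' : ∀ i, E i => ∑ i, Real.log (pol i (θ' i) (obs i s) (a i)) :=
      funext fun θ' =>
        Real.log_prod fun i _ => ne_of_gt (hpos i (θ' i) (obs i s) (a i))
    have hcomp : ∀ i, HasFDerivAt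
        (fun θ' : ∀ i, E i => Real.log (pol i (θ' i) (obs i s) (a i)))
        ((D i (obs i s) (a i)).comp (ContinuousLinearMap.proj i)) θ :=
      fun i => by
        have := HasFDerivAt.comp (x := θ) (hlogdiff i (obs i s) (a i))
          (ContinuousLinearMap.proj i : (∀ i, E i) →L[ℝ] E i).hasFDerivAt
        exact this
    have hsumd : HasFDerivAt
        (fun θ' : ∀ i, E i => ∑ i, Real.log (pol i (θ' i) (obs i s) (a i)))
        (∑ i, (D i (obs i s) (a i)).comp (ContinuousLinearMap.proj i)) θ :=
      HasFDerivAt.fun_sum fun i _ => hcomp i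
    rw [hfun]
    exact hsumd.fderiv
  -- composed local gradients
  set V : ∀ (s : S) (j : Fin n), A j → ((∀ i, E i) →L[ℝ] ℝ) :=
    fun s j b => (D j (obs j s) b).comp (ContinuousLinearMap.proj j) with hV
  have hscoreV : ∀ s j, ∑ b, pol j (θ j) (obs j s) b • V s j b = 0 := by
    intro s j
    have : ∑ b, pol j (θ j) (obs j s) b • V s j b
        = ((∑ b, pol j (θ j) (obs j s) b • D j (obs j s) b).comp
            (ContinuousLinearMap.proj j)) := by
      rw [ContinuousLinearMap.finset_sum_comp]
      exact Finset.sum_congr rfl fun b _ => (ContinuousLinearMap.smul_comp _ _ _).symm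
    rw [this, hscore, ContinuousLinearMap.zero_comp]
  -- per-state reduction via key_sum
  have hstate : ∀ s : S,
      ∑ a : ∀ i, A i, ((∏ i, pol i (θ i) (obs i s) (a i)) * Atot s a) • ∑ j, V s j (a j)
        = ∑ j, w j • ∑ b, (pol j (θ j) (obs j s) b * Aloc j (obs j s, b)) • V s j b := by
    intro s
    have := key_sum A (fun k => pol k (θ k) (obs k s)) (fun k => hsum k (θ k) (obs k s))
      (V s) (hscoreV s) (fun k b => Aloc k (obs k s, b)) w c
    rw [← this]
    exact Finset.sum_congr rfl fun a _ => by rw [hAtot]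
  calc ∑ s : S, ∑ a : ∀ i, A i,
        (ρ s * ((∏ i, pol i (θ i) (obs i s) (a i)) * Atot s a)) •
          fderiv ℝ (fun θ' : ∀ i, E i =>
            Real.log (∏ i, pol i (θ' i) (obs i s) (a i))) θ
      = ∑ s : S, ρ s • ∑ a : ∀ i, A i,
          ((∏ i, pol i (θ i) (obs i s) (a i)) * Atot s a) • ∑ j, V s j (a j) := by
        refine Finset.sum_congr rfl fun s _ => ?_
        rw [Finset.smul_sum]
        refine Finset.sum_congr rfl fun a _ => ?_
        rw [hglobal s a, mul_smul]
    _ = ∑ s : S, ∑ j, (ρ s * w j) •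
          ∑ b, (pol j (θ j) (obs j s) b * Aloc j (obs j s, b)) • V s j b := by
        refine Finset.sum_congr rfl fun s _ => ?_
        rw [hstate s, Finset.smul_sum]
        exact Finset.sum_congr rfl fun j _ => (mul_smul _ _ _).symm
    _ = ∑ j, w j •
          ((∑ s : S, ∑ b : A j,
              (ρ s * (pol j (θ j) (obs j s) b * Aloc j (obs j s, b))) •
                D j (obs j s) b).comp (ContinuousLinearMap.proj j)) := by
        rw [Finset.sum_comm]
        refine Finset.sum_congr rfl fun j _ => ?_
        rw [ContinuousLinearMap.finset_sum_comp, Finset.smul_sum]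
        refine Finset.sum_congr rfl fun s _ => ?_
        rw [ContinuousLinearMap.finset_sum_comp, Finset.smul_sum, Finset.smul_sum]
        refine Finset.sum_congr rfl fun b _ => ?_
        rw [ContinuousLinearMap.smul_comp, smul_smul, smul_smul]
        congr 1
        ring
end

section
/- Let S and A be nonempty finite types, β > 0 and γ ∈ [0,1) real numbers, and let p : S → A → S → ℝ be a transition kernel with p(s,a,s') ≥ 0 and ∑_{s'} p(s,a,s') = 1 for all (s,a). Then for every reward function R : S → A → ℝ there exists a unique Q : S → A → ℝ such that for all (s,a), Q(s,a) − γ·∑_{s'} p(s,a,s')·( β·log ∑_{a'} exp(Q(s',a')/β) ) = R(s,a). Equivalently, the inverse soft Bellman operator 𝒯*, defined by (𝒯*Q)(s,a) = Q(s,a) − γ·E_{s'∼p(·|s,a)}[β·log ∑_{a'} exp(Q(s',a')/β)], is a bijection from the set of functions S → A → ℝ onto itself. -/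
private lemma lse_le_aux {A : Type*} [Fintype A] [Nonempty A]
    {β : ℝ} (hβ : 0 < β) (x y : A → ℝ) {M : ℝ} (h : ∀ a, x a ≤ y a + M) :
    β * Real.log (∑ a, Real.exp (x a / β)) ≤
      β * Real.log (∑ a, Real.exp (y a / β)) + M := by
  have hy : (0:ℝ) < ∑ a, Real.exp (y a / β) :=
    Finset.sum_pos (fun a _ => Real.exp_pos _) Finset.univ_nonempty
  have hsum : ∑ a, Real.exp (x a / β) ≤ Real.exp (M / β) * ∑ a, Real.exp (y a / β) := by
    rw [Finset.mul_sum]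
    refine Finset.sum_le_sum fun a _ => ?_
    rw [← Real.exp_add]
    apply Real.exp_le_exp.mpr
    rw [← add_div]
    have := h a
    have := h a
    gcongr
    linarith
  have hlog := Real.log_le_log (by positivity) hsum
  rw [Real.log_mul (Real.exp_ne_zero _) (ne_of_gt hy), Real.log_exp] at hlog
  have := mul_le_mul_of_nonneg_left hlog (le_of_lt hβ)
  calc β * Real.log (∑ a, Real.exp (x a / β))
      ≤ β * (M / β + Real.log (∑ a, Real.exp (y a / β))) := this
    _ = β * Real.log (∑ a, Real.exp (y a / β)) + M := by field_simp; ring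

private lemma lse_abs_le {A : Type*} [Fintype A] [Nonempty A]
    {β : ℝ} (hβ : 0 < β) (x y : A → ℝ) {M : ℝ} (h : ∀ a, |x a - y a| ≤ M) :
    |β * Real.log (∑ a, Real.exp (x a / β)) - β * Real.log (∑ a, Real.exp (y a / β))| ≤ M := by
  rw [abs_sub_le_iff]
  constructor
  · have := lse_le_aux hβ x y (fun a => by have := (abs_le.mp (h a)).2; linarith)
    linarith
  · have := lse_le_aux hβ y x (fun a => by have := (abs_le.mp (h a)).1; linarith)
    linarith

/-- The inverse soft Bellman operator is a one-to-one correspondence between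
Q-functions and reward functions: for every reward `R` there is a unique `Q`
with `𝒯* Q = R`; equivalently, `𝒯*` is a bijection on `S → A → ℝ`. -/
theorem inverse_soft_bellman_bijective
    {S A : Type*} [Fintype S] [Fintype A] [Nonempty S] [Nonempty A]
    (β γ : ℝ) (hβ : 0 < β) (hγ0 : 0 ≤ γ) (hγ1 : γ < 1)
    (p : S → A → S → ℝ)
    (hp_nonneg : ∀ s a s', 0 ≤ p s a s')
    (hp_sum : ∀ s a, ∑ s', p s a s' = 1) :
    (∀ R : S → A → ℝ, ∃! Q : S → A → ℝ, ∀ s a,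
        Q s a - γ * ∑ s', p s a s' * (β * Real.log (∑ a', Real.exp (Q s' a' / β)))
          = R s a) ∧
    Function.Bijective (fun (Q : S → A → ℝ) (s : S) (a : A) =>
        Q s a - γ * ∑ s', p s a s' * (β * Real.log (∑ a', Real.exp (Q s' a' / β)))) := by
  set V : (S → A → ℝ) → S → ℝ :=
    fun Q s => β * Real.log (∑ a', Real.exp (Q s a' / β)) with hVdef
  have hVlip : ∀ (Q₁ Q₂ : S → A → ℝ) (s : S), |V Q₁ s - V Q₂ s| ≤ dist Q₁ Q₂ := by
    intro Q₁ Q₂ s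
    apply lse_abs_le hβ
    intro a
    rw [← Real.dist_eq]
    exact (dist_le_pi_dist (Q₁ s) (Q₂ s) a).trans (dist_le_pi_dist Q₁ Q₂ s)
  have key : ∀ R : S → A → ℝ, ∃! Q : S → A → ℝ, ∀ s a,
      Q s a - γ * ∑ s', p s a s' * V Q s' = R s a := by
    intro R
    set T : (S → A → ℝ) → (S → A → ℝ) :=
      fun Q s a => R s a + γ * ∑ s', p s a s' * V Q s' with hTdef
    have hcontr : ContractingWith ⟨γ, hγ0⟩ T := by
      constructor
      · exact_mod_cast hγ1
      · apply LipschitzWith.of_dist_le_mul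
        intro Q₁ Q₂
        rw [dist_pi_le_iff (by positivity)]
        intro s
        rw [dist_pi_le_iff (by positivity)]
        intro a
        rw [Real.dist_eq]
        have heq : T Q₁ s a - T Q₂ s a = γ * ∑ s', p s a s' * (V Q₁ s' - V Q₂ s') := by
          simp only [hTdef, mul_sub, Finset.sum_sub_distrib, mul_sub]
          ring
        rw [heq, abs_mul, abs_of_nonneg hγ0]
        have : |∑ s', p s a s' * (V Q₁ s' - V Q₂ s')| ≤ dist Q₁ Q₂ := by
          calc |∑ s', p s a s' * (V Q₁ s' - V Q₂ s')|
              ≤ ∑ s', |p s a s' * (V Q₁ s' - V Q₂ s')| := Finset.abs_sum_le_sum_abs _ _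
            _ ≤ ∑ s', p s a s' * dist Q₁ Q₂ := by
                refine Finset.sum_le_sum fun s' _ => ?_
                rw [abs_mul, abs_of_nonneg (hp_nonneg s a s')]
                exact mul_le_mul_of_nonneg_left (hVlip Q₁ Q₂ s') (hp_nonneg s a s')
            _ = dist Q₁ Q₂ := by rw [← Finset.sum_mul, hp_sum, one_mul]
        push_cast
        exact mul_le_mul_of_nonneg_left this hγ0
    have hiff : ∀ Q : S → A → ℝ,
        (∀ s a, Q s a - γ * ∑ s', p s a s' * V Q s' = R s a) ↔ Function.IsFixedPt T Q := by
      intro Q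
      constructor
      · intro h
        funext s a
        have := h s a
        simp only [hTdef]
        linarith
      · intro h s a
        have := congrFun (congrFun h s) a
        simp only [hTdef] at this
        linarith
    refine ⟨ContractingWith.fixedPoint T hcontr, ?_, ?_⟩
    · exact (hiff _).mpr hcontr.fixedPoint_isFixedPt
    · intro Q hQ
      exact hcontr.fixedPoint_unique ((hiff Q).mp hQ)
  refine ⟨key, ?_, ?_⟩
  · intro Q₁ Q₂ h
    have h1 : ∀ s a, Q₁ s a - γ * ∑ s', p s a s' * V Q₁ s' =
        (fun s a => Q₁ s a - γ * ∑ s', p s a s' * V Q₁ s') s a := fun s a => rfl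
    obtain ⟨Q, _, huniq⟩ := key (fun s a => Q₁ s a - γ * ∑ s', p s a s' * V Q₁ s')
    have e1 := huniq Q₁ (fun s a => rfl)
    have e2 := huniq Q₂ (fun s a => by
      have := congrFun (congrFun h s) a
      simpa using this.symm)
    rw [e1, e2]
  · intro R
    obtain ⟨Q, hQ, _⟩ := key R
    exact ⟨Q, funext fun s => funext fun a => hQ s a⟩
end

section
/- Let A be a nonempty finite type, β > 0 a real number, p : A → ℝ nonnegative weights with ∑_{a} p(a) = 1, and q : A → ℝ. Define f : ℝ → ℝ by f(v) = ∑_{a} p(a)·exp((q(a) − v)/β) − ∑_{a} p(a)·((q(a) − v)/β) − 1. Then f attains a strict global minimum at v* = β·log( ∑_{a} p(a)·exp(q(a)/β) ); that is, f(v) > f(v*) for all v ≠ v*, and moreover ∑_{a} p(a)·exp((q(a) − v*)/β) = 1. -/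
/-- The extreme-V objective attains a strict global minimum exactly at the
log-sum-exp (softmax) value `v* = β·log(∑ₐ p(a)·exp(q(a)/β))`, where the
exponential term has expectation one. -/
theorem extremeV_unique_minimizer
    {A : Type*} [Fintype A] [Nonempty A]
    (β : ℝ) (hβ : 0 < β)
    (p : A → ℝ) (hp_nonneg : ∀ a, 0 ≤ p a) (hp_sum : ∑ a, p a = 1)
    (q : A → ℝ)
    (f : ℝ → ℝ)
    (hf : ∀ v : ℝ, f v =
      (∑ a, p a * Real.exp ((q a - v) / β)) - (∑ a, p a * ((q a - v) / β)) - 1)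
    (vstar : ℝ)
    (hvstar : vstar = β * Real.log (∑ a, p a * Real.exp (q a / β))) :
    (∀ v : ℝ, v ≠ vstar → f vstar < f v) ∧
      ∑ a, p a * Real.exp ((q a - vstar) / β) = 1 := by
  have hβ' : β ≠ 0 := ne_of_gt hβ
  set S : ℝ := ∑ a, p a * Real.exp (q a / β) with hS_def
  have hex : ∃ a : A, 0 < p a := by
    by_contra h
    push_neg at h
    have : ∀ a, p a = 0 := fun a => le_antisymm (h a) (hp_nonneg a)
    simp [this] at hp_sum
  obtain ⟨a0, ha0⟩ := hex
  have hS : 0 < S := by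
    apply Finset.sum_pos' (fun a _ => mul_nonneg (hp_nonneg a) (Real.exp_pos _).le)
    exact ⟨a0, Finset.mem_univ a0, mul_pos ha0 (Real.exp_pos _)⟩
  have key : ∀ v : ℝ, ∑ a, p a * Real.exp ((q a - v) / β) = S * Real.exp (-v / β) := by
    intro v
    rw [hS_def, Finset.sum_mul]
    apply Finset.sum_congr rfl
    intro a _
    rw [mul_assoc, ← Real.exp_add]
    ring_nf
  have hlin : ∀ v : ℝ, ∑ a, p a * ((q a - v) / β) =
      (∑ a, p a * q a) / β - v / β := by
    intro v
    have : ∀ a : A, p a * ((q a - v) / β) = p a * q a / β - p a * (v / β) := by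
      intro a; ring
    rw [Finset.sum_congr rfl (fun a _ => this a), Finset.sum_sub_distrib,
      ← Finset.sum_div, ← Finset.sum_mul, hp_sum]
    ring
  have hvβ : vstar / β = Real.log S := by
    rw [hvstar]; field_simp
  have hone : ∑ a, p a * Real.exp ((q a - vstar) / β) = 1 := by
    rw [key, neg_div, Real.exp_neg, hvβ, Real.exp_log hS, mul_inv_cancel₀ (ne_of_gt hS)]
  refine ⟨?_, hone⟩
  intro v hv
  have hSev : S * Real.exp (-v / β) = Real.exp ((vstar - v) / β) := by
    have : (vstar - v) / β = Real.log S + (-v / β) := by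
      rw [← hvβ]; ring
    rw [this, Real.exp_add, Real.exp_log hS]
  have hx : (vstar - v) / β ≠ 0 := by
    intro h
    apply hv
    have := (div_eq_zero_iff.mp h).resolve_right hβ'
    linarith
  have hgt : ((vstar - v) / β) + 1 < Real.exp ((vstar - v) / β) :=
    Real.add_one_lt_exp hx
  have h1 : f vstar = 1 - ((∑ a, p a * q a) / β - vstar / β) - 1 := by
    rw [hf, hone, hlin]
  have h2 : f v = Real.exp ((vstar - v) / β) - ((∑ a, p a * q a) / β - v / β) - 1 := by
    rw [hf, key, hSev, hlin]
  rw [h1, h2]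
  have : (vstar - v) / β = vstar / β - v / β := by ring
  linarith [hgt, this]
end
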